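/- arXiv:1611.07684 — 2 statements merged into one kernel-verified Lean document; each statement's English description precedes it below -/
import Mathlib

section
/- For any p,q ≥ 0, the tensor product Cl(1,1) ⊗ Cl(p,q) is isomorphic as an R-algebra to Cl(p+1,q+1). -/
open scoped TensorProduct Quaternion

/-- The diagonal quadratic form of signature `(p, q)` on `ℝ^(p+q)`. -/
noncomputable def signatureForm (p q : ℕ) : QuadraticForm ℝ (Fin (p + q) → ℝ) :=
  QuadraticMap.weightedSumSquares ℝ (fun i : Fin (p + q) => if (i : ℕ) < p then (1 : ℝ) else -1)

/-- The real Clifford algebra `Cl(p,q)`. -/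
noncomputable def Cl (p q : ℕ) : Type :=
  CliffordAlgebra (signatureForm p q)

noncomputable instance (p q : ℕ) : Ring (Cl p q) :=
  inferInstanceAs (Ring (CliffordAlgebra _))

noncomputable instance (p q : ℕ) : Algebra ℝ (Cl p q) :=
  inferInstanceAs (Algebra ℝ (CliffordAlgebra _))

/-- The commutative algebra `K(r,s)` with `r+s` commuting generators,
`r` squaring to `+1` and `s` squaring to `-1`. -/
noncomputable def K (r s : ℕ) : Type :=
  MvPolynomial (Fin (r + s)) ℝ ⧸ Ideal.span
    {f : MvPolynomial (Fin (r + s)) ℝ | ∃ i : Fin (r + s),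
      f = MvPolynomial.X i ^ 2 - MvPolynomial.C (if (i : ℕ) < r then (1 : ℝ) else -1)}

noncomputable instance (r s : ℕ) : CommRing (K r s) :=
  inferInstanceAs (CommRing (_ ⧸ _))

noncomputable instance (r s : ℕ) : Algebra ℝ (K r s) :=
  inferInstanceAs (Algebra ℝ (_ ⧸ _))

/-- The `k`-fold tensor power of an `ℝ`-algebra `A`. -/
noncomputable def tensorPow (A : Type) [Ring A] [Algebra ℝ A] (k : ℕ) : Type :=
  ⨂[ℝ] (_ : Fin k), A

noncomputable instance (A : Type) [Ring A] [Algebra ℝ A] (k : ℕ) : Ring (tensorPow A k) :=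
  inferInstanceAs (Ring (⨂[ℝ] (_ : Fin k), A))

noncomputable instance (A : Type) [Ring A] [Algebra ℝ A] (k : ℕ) : Algebra ℝ (tensorPow A k) :=
  inferInstanceAs (Algebra ℝ (⨂[ℝ] (_ : Fin k), A))

/-!
If `ω ∈ Cl(Q₁)` is even, squares to `1` and anticommutes with the vectors of `Q₁`, then
`m₁ + m₂ ↦ ι m₁ ⊗ 1 + ω ⊗ ι m₂` squares to `Q₁ m₁ + Q₂ m₂`, hence defines
`Cl(Q₁ ⊕ Q₂) → Cl(Q₁) ⊗ Cl(Q₂)`. Conversely `ι m₂ ↦ ω ι m₂` squares to `Q₂ m₂` (being even, `ω`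
commutes with `ι m₂`) and commutes with the image of `Cl(Q₁)`, because `ω` absorbs the sign by
which the two sets of vectors anticommute; the two maps are mutually inverse since `ω² = 1`.
In `Cl(1,1)` the volume element `ω = e₁e₂` has all three properties (`ω² = -e₁²e₂² = 1`), and
reordering coordinates identifies the form `(1,1) ⊕ (p,q)` with `(p+1,q+1)`.
-/

namespace QuadraticMap

variable {ι κ R : Type*} [Fintype ι] [Fintype κ] [CommSemiring R]

def IsometryEquiv.weightedSumSquaresProd (w : ι → R) (w' : κ → R) :
    ((weightedSumSquares R w).prod (weightedSumSquares R w')).IsometryEquiv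
      (weightedSumSquares R (Sum.elim w w')) where
  __ := (LinearEquiv.sumArrowLequivProdArrow ι κ R R).symm
  map_app' := by
    rintro ⟨f, g⟩
    simp [weightedSumSquares_apply, Fintype.sum_sum_type]

def IsometryEquiv.weightedSumSquaresReindex {w : ι → R} {w' : κ → R} (e : ι ≃ κ)
    (h : ∀ i, w' (e i) = w i) :
    (weightedSumSquares R w).IsometryEquiv (weightedSumSquares R w') where
  __ := LinearEquiv.funCongrLeft R R e.symm
  map_app' v := by
    simp only [weightedSumSquares_apply]
    rw [← e.sum_comp]
    simp [h]

variable [DecidableEq ι]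

theorem weightedSumSquares_single (w : ι → R) (i : ι) (a : R) :
    weightedSumSquares R w (Pi.single i a) = w i * (a * a) := by
  simp [weightedSumSquares_apply, Pi.single_apply]

theorem isOrtho_weightedSumSquares_single (w : ι → R) {i j : ι} (hij : i ≠ j) (a b : R) :
    (weightedSumSquares R w).IsOrtho (Pi.single i a) (Pi.single j b) := by
  rw [isOrtho_def]
  simp only [weightedSumSquares_apply, Pi.add_apply, Pi.single_apply, smul_eq_mul]
  rw [Fintype.sum_eq_add i j hij fun k hk => by simp [hk.1, hk.2]]
  simp [hij, hij.symm]

end QuadraticMap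

theorem commute_mul_of_anticommute {A : Type*} [Ring A] {a b c : A} (hb : a * b = -(b * a))
    (hc : a * c = -(c * a)) :
    Commute a (b * c) := by
  rw [commute_iff_eq, ← mul_assoc, hb, neg_mul, mul_assoc, hc, mul_neg, neg_neg, mul_assoc]

namespace CliffordAlgebra

variable {R M M₁ M₂ A : Type*} [CommRing R] [AddCommGroup M] [Module R M]
  [AddCommGroup M₁] [Module R M₁] [AddCommGroup M₂] [Module R M₂] [Ring A] [Algebra R A]

section isOrtho

variable {Q : QuadraticForm R M} {a b : M}

theorem ι_mul_ι_mul_self_of_isOrtho (h : Q.IsOrtho a b) :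
    (ι Q a * ι Q b) * (ι Q a * ι Q b) = -algebraMap R _ (Q a * Q b) := by
  rw [mul_ι_mul_ι_mul_comm_of_isOrtho _ h.symm, ι_sq_scalar, ι_sq_scalar, map_mul]

theorem ι_left_mul_ι_mul_ι_of_isOrtho (h : Q.IsOrtho a b) :
    ι Q a * (ι Q a * ι Q b) = -((ι Q a * ι Q b) * ι Q a) := by
  rw [mul_assoc, ι_mul_ι_comm_of_isOrtho h.symm, mul_neg, neg_neg]

theorem ι_right_mul_ι_mul_ι_of_isOrtho (h : Q.IsOrtho a b) :
    ι Q b * (ι Q a * ι Q b) = -((ι Q a * ι Q b) * ι Q b) := by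
  rw [← mul_assoc, ι_mul_ι_comm_of_isOrtho h.symm, neg_mul]

end isOrtho

theorem commute_of_forall_commute_ι {Q : QuadraticForm R M} {x : A}
    (g : CliffordAlgebra Q →ₐ[R] A) (h : ∀ m, Commute x (g (ι Q m))) (y : CliffordAlgebra Q) :
    Commute x (g y) := by
  induction y using CliffordAlgebra.induction with
  | algebraMap r => rw [AlgHom.commutes]; exact Algebra.commute_algebraMap_right r x
  | ι m => exact h m
  | mul y z hy hz => rw [map_mul]; exact hy.mul_right hz
  | add y z hy hz => rw [map_add]; exact hy.add_right hz

section twisted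

variable {Q₁ : QuadraticForm R M₁} {Q₂ : QuadraticForm R M₂} {ω : CliffordAlgebra Q₁}

theorem commute_map_inl_ι_inr (hω : ω ∈ evenOdd Q₁ 0) (m : M₂) :
    Commute (map (QuadraticMap.Isometry.inl Q₁ Q₂) ω) (ι (Q₁.prod Q₂) (0, m)) := by
  simpa using commute_map_mul_map_of_isOrtho_of_mem_evenOdd_zero_left
    (QuadraticMap.Isometry.inl Q₁ Q₂) (QuadraticMap.Isometry.inr Q₁ Q₂)
    (fun _ _ => QuadraticMap.IsOrtho.inl_inr _ _) ω (ι Q₂ m) hω (ι_mem_evenOdd_one Q₂ m)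

variable (Q₂) in
def twistedInr (hω : ω ∈ evenOdd Q₁ 0) (hωω : ω * ω = 1) :
    CliffordAlgebra Q₂ →ₐ[R] CliffordAlgebra (Q₁.prod Q₂) :=
  lift Q₂ ⟨LinearMap.mulLeft R (map (QuadraticMap.Isometry.inl Q₁ Q₂) ω) ∘ₗ
      ι (Q₁.prod Q₂) ∘ₗ LinearMap.inr R M₁ M₂, fun m => by
    rw [LinearMap.comp_apply, LinearMap.comp_apply, LinearMap.mulLeft_apply, LinearMap.inr_apply,
      mul_assoc, ← mul_assoc (ι _ _), ← (commute_map_inl_ι_inr hω m).eq, mul_assoc, ← mul_assoc,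
      ← map_mul, hωω, map_one, one_mul, ι_sq_scalar, QuadraticMap.prod_apply, map_zero, zero_add]⟩

variable (hω : ω ∈ evenOdd Q₁ 0) (hωω : ω * ω = 1) (hιω : ∀ m, ι Q₁ m * ω = -(ω * ι Q₁ m))

theorem twistedInr_ι (m : M₂) :
    twistedInr Q₂ hω hωω (ι Q₂ m) = map (QuadraticMap.Isometry.inl Q₁ Q₂) ω * ι _ (0, m) :=
  lift_ι_apply _ _ _

include hιω in
theorem commute_map_inl_twistedInr (a : CliffordAlgebra Q₁) (b : CliffordAlgebra Q₂) :
    Commute (map (QuadraticMap.Isometry.inl Q₁ Q₂) a) (twistedInr Q₂ hω hωω b) := by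
  have hgen (m₁ : M₁) (m₂ : M₂) :
      Commute (map (QuadraticMap.Isometry.inl Q₁ Q₂) (ι Q₁ m₁))
        (twistedInr Q₂ hω hωω (ι Q₂ m₂)) := by
    rw [twistedInr_ι, map_apply_ι]
    refine commute_mul_of_anticommute ?_ ?_
    · simpa [map_apply_ι] using congrArg (map (QuadraticMap.Isometry.inl Q₁ Q₂)) (hιω m₁)
    · exact ι_mul_ι_comm_of_isOrtho (QuadraticMap.IsOrtho.inl_inr _ _)
  refine commute_of_forall_commute_ι _ (fun m₂ => ?_) b
  exact (commute_of_forall_commute_ι _ (fun m₁ => (hgen m₁ m₂).symm) a).symm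

variable (Q₂) in
def ofTensorTwisted :
    CliffordAlgebra Q₁ ⊗[R] CliffordAlgebra Q₂ →ₐ[R] CliffordAlgebra (Q₁.prod Q₂) :=
  Algebra.TensorProduct.lift _ _ (commute_map_inl_twistedInr hω hωω hιω)

variable (Q₂ ω) in
def twistedι : M₁ × M₂ →ₗ[R] CliffordAlgebra Q₁ ⊗[R] CliffordAlgebra Q₂ :=
  LinearMap.coprod (Algebra.TensorProduct.includeLeft.toLinearMap ∘ₗ ι Q₁)
    (TensorProduct.mk R _ _ ω ∘ₗ ι Q₂)

theorem twistedι_apply (m : M₁ × M₂) :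
    twistedι Q₂ ω m = ι Q₁ m.1 ⊗ₜ 1 + ω ⊗ₜ ι Q₂ m.2 := rfl

include hωω hιω in
theorem twistedι_mul_self (m : M₁ × M₂) :
    twistedι Q₂ ω m * twistedι Q₂ ω m = algebraMap R _ (Q₁.prod Q₂ m) := by
  simp only [twistedι_apply, add_mul, mul_add,
    Algebra.TensorProduct.tmul_mul_tmul, one_mul, mul_one, hιω, hωω, ι_sq_scalar,
    TensorProduct.neg_tmul, QuadraticMap.prod_apply, map_add]
  rw [Algebra.TensorProduct.algebraMap_apply, Algebra.TensorProduct.algebraMap_apply']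
  abel

variable (Q₂) in
def toTensorTwisted :
    CliffordAlgebra (Q₁.prod Q₂) →ₐ[R] CliffordAlgebra Q₁ ⊗[R] CliffordAlgebra Q₂ :=
  lift _ ⟨twistedι Q₂ ω, twistedι_mul_self hωω hιω⟩

theorem toTensorTwisted_ι (m : M₁ × M₂) :
    toTensorTwisted Q₂ hωω hιω (ι _ m) = ι Q₁ m.1 ⊗ₜ 1 + ω ⊗ₜ ι Q₂ m.2 :=
  lift_ι_apply _ _ _

theorem ofTensorTwisted_tmul (a : CliffordAlgebra Q₁) (b : CliffordAlgebra Q₂) :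
    ofTensorTwisted Q₂ hω hωω hιω (a ⊗ₜ b) =
      map (QuadraticMap.Isometry.inl Q₁ Q₂) a * twistedInr Q₂ hω hωω b :=
  Algebra.TensorProduct.lift_tmul _ _ _ _ _

theorem toTensorTwisted_comp_map_inl :
    (toTensorTwisted Q₂ hωω hιω).comp (map (QuadraticMap.Isometry.inl Q₁ Q₂)) =
      Algebra.TensorProduct.includeLeft := by
  refine hom_ext (LinearMap.ext fun m => ?_)
  simp only [LinearMap.comp_apply, AlgHom.toLinearMap_apply, AlgHom.comp_apply, map_apply_ι,
    QuadraticMap.Isometry.inl_apply, toTensorTwisted_ι, map_zero, TensorProduct.tmul_zero,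
    add_zero, Algebra.TensorProduct.includeLeft_apply]

theorem toTensorTwisted_comp_twistedInr :
    (toTensorTwisted Q₂ hωω hιω).comp (twistedInr Q₂ hω hωω) =
      Algebra.TensorProduct.includeRight := by
  refine hom_ext (LinearMap.ext fun m => ?_)
  simp only [LinearMap.comp_apply, AlgHom.toLinearMap_apply, AlgHom.comp_apply, twistedInr_ι,
    map_mul, toTensorTwisted_ι, map_zero, TensorProduct.zero_tmul, zero_add,
    Algebra.TensorProduct.includeRight_apply]
  rw [← AlgHom.comp_apply, toTensorTwisted_comp_map_inl, Algebra.TensorProduct.includeLeft_apply,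
    Algebra.TensorProduct.tmul_mul_tmul, hωω, one_mul]

theorem ofTensorTwisted_comp_toTensorTwisted :
    (ofTensorTwisted Q₂ hω hωω hιω).comp (toTensorTwisted Q₂ hωω hιω) = AlgHom.id R _ := by
  refine hom_ext (LinearMap.ext fun m => ?_)
  simp only [LinearMap.comp_apply, AlgHom.toLinearMap_apply, AlgHom.comp_apply, AlgHom.id_apply,
    toTensorTwisted_ι, map_add, ofTensorTwisted_tmul, map_one, mul_one, twistedInr_ι,
    map_apply_ι, QuadraticMap.Isometry.inl_apply]
  rw [← mul_assoc, ← map_mul, hωω, map_one, one_mul, ← map_add, Prod.mk_add_mk, add_zero,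
    zero_add]

theorem toTensorTwisted_comp_ofTensorTwisted :
    (toTensorTwisted Q₂ hωω hιω).comp (ofTensorTwisted Q₂ hω hωω hιω) = AlgHom.id R _ := by
  refine Algebra.TensorProduct.ext' fun a b => ?_
  rw [AlgHom.comp_apply, ofTensorTwisted_tmul, map_mul, ← AlgHom.comp_apply,
    toTensorTwisted_comp_map_inl, ← AlgHom.comp_apply, toTensorTwisted_comp_twistedInr,
    Algebra.TensorProduct.includeLeft_apply, Algebra.TensorProduct.includeRight_apply,
    Algebra.TensorProduct.tmul_mul_tmul, mul_one, one_mul, AlgHom.id_apply]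

variable (Q₂) in
def tensorEquivProd :
    CliffordAlgebra Q₁ ⊗[R] CliffordAlgebra Q₂ ≃ₐ[R] CliffordAlgebra (Q₁.prod Q₂) :=
  AlgEquiv.ofAlgHom _ _ (ofTensorTwisted_comp_toTensorTwisted hω hωω hιω)
    (toTensorTwisted_comp_ofTensorTwisted hω hωω hιω)

end twisted

end CliffordAlgebra

section signature

open CliffordAlgebra QuadraticMap

theorem signatureForm_isOrtho_single {p q : ℕ} {i j : Fin (p + q)} (hij : i ≠ j) (a b : ℝ) :
    (signatureForm p q).IsOrtho (Pi.single i a) (Pi.single j b) :=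
  isOrtho_weightedSumSquares_single _ hij a b

theorem signatureForm_single (p q : ℕ) (i : Fin (p + q)) :
    signatureForm p q (Pi.single i 1) = if (i : ℕ) < p then 1 else -1 := by
  rw [signatureForm, weightedSumSquares_single, mul_one, mul_one]

noncomputable def volumeCl11 : CliffordAlgebra (signatureForm 1 1) :=
  ι _ (Pi.single 0 1) * ι _ (Pi.single 1 1)

theorem volumeCl11_mem_evenOdd_zero : volumeCl11 ∈ evenOdd (signatureForm 1 1) 0 :=
  ι_mul_ι_mem_evenOdd_zero _ _ _

theorem volumeCl11_mul_self : volumeCl11 * volumeCl11 = 1 := by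
  rw [volumeCl11, ι_mul_ι_mul_self_of_isOrtho (signatureForm_isOrtho_single (by decide) 1 1),
    signatureForm_single, signatureForm_single]
  norm_num

theorem ι_mul_volumeCl11 (m : Fin (1 + 1) → ℝ) :
    ι _ m * volumeCl11 = -(volumeCl11 * ι _ m) := by
  have hm : m = m 0 • Pi.single 0 1 + m 1 • Pi.single 1 1 := by
    ext i; fin_cases i <;> simp
  have h := signatureForm_isOrtho_single (p := 1) (q := 1) (i := 0) (j := 1) (by decide) 1 1
  rw [hm, map_add, map_smul, map_smul, add_mul, mul_add, smul_mul_assoc, smul_mul_assoc,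
    mul_smul_comm, mul_smul_comm, volumeCl11, ι_left_mul_ι_mul_ι_of_isOrtho h,
    ι_right_mul_ι_mul_ι_of_isOrtho h, smul_neg, smul_neg, neg_add]

noncomputable def signatureIndexEquiv (p q : ℕ) :
    Fin (1 + 1) ⊕ Fin (p + q) ≃ Fin ((p + 1) + (q + 1)) :=
  Equiv.ofBijective
    (Sum.elim (fun i => ⟨if (i : ℕ) = 0 then 0 else p + 1, by split <;> omega⟩)
      (fun j => ⟨if (j : ℕ) < p then j + 1 else j + 2, by split <;> omega⟩)) <| by
    rw [Fintype.bijective_iff_injective_and_card]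
    refine ⟨?_, by simp only [Fintype.card_sum, Fintype.card_fin]; omega⟩
    rintro (⟨i, hi⟩ | ⟨j, hj⟩) (⟨i', hi'⟩ | ⟨j', hj'⟩) h <;>
      simp only [Sum.elim_inl, Sum.elim_inr, Fin.mk.injEq, Sum.inl.injEq, Sum.inr.injEq] at h ⊢ <;>
      split_ifs at h <;> omega

theorem signatureIndexEquiv_sign (p q : ℕ) (x : Fin (1 + 1) ⊕ Fin (p + q)) :
    (if (signatureIndexEquiv p q x : ℕ) < p + 1 then (1 : ℝ) else -1) =
      Sum.elim (fun i : Fin (1 + 1) => if (i : ℕ) < 1 then 1 else -1)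
        (fun j : Fin (p + q) => if (j : ℕ) < p then 1 else -1) x := by
  rcases x with ⟨i, hi⟩ | ⟨j, hj⟩ <;> simp only [signatureIndexEquiv, Equiv.ofBijective_apply,
    Sum.elim_inl, Sum.elim_inr] <;> split_ifs <;> first | rfl | (exfalso; omega)

noncomputable def signatureProdIsometryEquiv (p q : ℕ) :
    ((signatureForm 1 1).prod (signatureForm p q)).IsometryEquiv (signatureForm (p + 1) (q + 1)) :=
  (IsometryEquiv.weightedSumSquaresProd _ _).trans
    (IsometryEquiv.weightedSumSquaresReindex (signatureIndexEquiv p q)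
      (signatureIndexEquiv_sign p q))

end signature

theorem stmt4 (p q : ℕ) : Nonempty ((Cl 1 1 ⊗[ℝ] Cl p q) ≃ₐ[ℝ] Cl (p + 1) (q + 1)) :=
  ⟨(CliffordAlgebra.tensorEquivProd _ volumeCl11_mem_evenOdd_zero volumeCl11_mul_self
      ι_mul_volumeCl11).trans (CliffordAlgebra.equivOfIsometry (signatureProdIsometryEquiv p q))⟩
end

section
/- The commutative algebra K(r,s) generated by r+s pairwise commuting generators with r of them squaring to +1 and s squaring to -1 satisfies: if s ≥ 1 then K(r,s) is isomorphic as an R-algebra to the (r+s)-fold tensor product C^{⊗(r+s)} (tensor powers of Cl(0,1) ≅ C), and if s = 0 then K(r,0) is isomorphic to the r-fold tensor product (R×R)^{⊗r}. -/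
open scoped TensorProduct Quaternion

/-!
`K r s` is presented by generators `eᵢ` and relations `eᵢ² = ±1`, and a tensor power of `ℂ`
(resp. of `ℝ × ℝ`) is presented by the copies of `I` (resp. of `(1, -1)`), each squaring to
`-1` (resp. `1`). So algebra maps in both directions are fixed by the images of generators, and
it suffices to match generators. For `s = 0` the two presentations coincide. For `s ≥ 1` pick a
generator `e_L` with `e_L² = -1`: for `i < r` the product `eᵢ e_L` squares to `-1`, and
`eᵢ = -(eᵢ e_L) e_L`, so replacing each such `eᵢ` by `eᵢ e_L` presents `K r s` by `r + s`
square roots of `-1`.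
-/

open MvPolynomial PiTensorProduct

namespace PiTensorProduct

variable {R ι S : Type*} {A : ι → Type*} [CommSemiring R] [Fintype ι]
  [∀ i, Semiring (A i)] [∀ i, Algebra R (A i)] [CommSemiring S] [Algebra R S]

noncomputable def liftCommAlgHom (f : ∀ i, A i →ₐ[R] S) : (⨂[R] i, A i) →ₐ[R] S :=
  liftAlgHom ((MultilinearMap.mkPiAlgebra R ι S).compLinearMap fun i => (f i).toLinearMap)
    (by simp) (by simp [Finset.prod_mul_distrib])

theorem liftCommAlgHom_singleAlgHom [DecidableEq ι] (f : ∀ i, A i →ₐ[R] S) (i : ι) (a : A i) :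
    liftCommAlgHom f (singleAlgHom i a) = f i a := by
  simp only [liftCommAlgHom, singleAlgHom_apply, liftAlgHom, AlgHom.ofLinearMap_apply,
    lift.tprod, MultilinearMap.compLinearMap_apply, MultilinearMap.mkPiAlgebra_apply,
    AlgHom.toLinearMap_apply]
  rw [Fintype.prod_eq_single i fun j hj => by simp [Pi.mulSingle, Function.update_of_ne hj]]
  simp

end PiTensorProduct

section RealProd

variable {B : Type*} [Ring B] [Algebra ℝ B]

noncomputable def liftRealProd (v : B) (hv : v * v = 1) : (ℝ × ℝ) →ₐ[ℝ] B where
  toFun z := ((z.1 + z.2) / 2) • (1 : B) + ((z.1 - z.2) / 2) • v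
  map_one' := by norm_num
  map_mul' z w := by
    simp only [Prod.fst_mul, Prod.snd_mul, add_mul, mul_add, smul_mul_smul_comm, hv, one_mul,
      mul_one]
    match_scalars <;> ring
  map_zero' := by norm_num
  map_add' z w := by
    simp only [Prod.fst_add, Prod.snd_add]
    match_scalars <;> ring
  commutes' c := by
    change ((c + c) / 2) • (1 : B) + ((c - c) / 2) • v = _
    rw [Algebra.algebraMap_eq_smul_one]
    match_scalars <;> ring

theorem liftRealProd_apply_one_neg_one (v : B) (hv : v * v = 1) :
    liftRealProd v hv (1, -1) = v := by
  simp [liftRealProd]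

theorem realProd_algHom_ext {f g : (ℝ × ℝ) →ₐ[ℝ] B} (h : f (1, -1) = g (1, -1)) : f = g := by
  ext z
  have hz : z = ((z.1 + z.2) / 2) • (1 : ℝ × ℝ) + ((z.1 - z.2) / 2) • ((1 : ℝ), (-1 : ℝ)) := by
    ext <;> simp <;> ring
  rw [hz, map_add, map_add, map_smul, map_smul, map_smul, map_smul, map_one, map_one, h]

end RealProd

noncomputable def tensorPowI {n : ℕ} (j : Fin n) : ⨂[ℝ] _ : Fin n, ℂ :=
  singleAlgHom (A := fun _ => ℂ) j Complex.I

theorem tensorPowI_mul_self {n : ℕ} (j : Fin n) : tensorPowI j * tensorPowI j = -1 := by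
  rw [tensorPowI, ← map_mul, Complex.I_mul_I, map_neg, map_one]

noncomputable def tensorPowE {n : ℕ} (j : Fin n) : ⨂[ℝ] _ : Fin n, ℝ × ℝ :=
  singleAlgHom (A := fun _ => ℝ × ℝ) j (1, -1)

theorem tensorPowE_mul_self {n : ℕ} (j : Fin n) : tensorPowE j * tensorPowE j = 1 := by
  rw [tensorPowE, ← map_mul, show ((1 : ℝ), (-1 : ℝ)) * (1, -1) = 1 by ext <;> norm_num, map_one]

namespace K

variable {r s : ℕ}

noncomputable def gen (i : Fin (r + s)) : K r s :=
  Ideal.Quotient.mk _ (X i)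

theorem gen_mul_self (i : Fin (r + s)) :
    gen i * gen i = algebraMap ℝ (K r s) (if (i : ℕ) < r then 1 else -1) := by
  rw [← sub_eq_zero, ← pow_two]
  change Ideal.Quotient.mk _ (X i ^ 2 - C _) = 0
  exact Ideal.Quotient.eq_zero_iff_mem.2 (Ideal.subset_span ⟨i, rfl⟩)

theorem gen_mul_self_of_lt {i : Fin (r + s)} (hi : (i : ℕ) < r) : gen i * gen i = 1 := by
  rw [gen_mul_self, if_pos hi, map_one]

theorem gen_mul_self_of_not_lt {i : Fin (r + s)} (hi : ¬ (i : ℕ) < r) : gen i * gen i = -1 := by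
  rw [gen_mul_self, if_neg hi, map_neg, map_one]

section Lift

variable {B : Type*} [CommRing B] [Algebra ℝ B]

noncomputable def lift (u : Fin (r + s) → B)
    (hu : ∀ i, u i * u i = algebraMap ℝ B (if (i : ℕ) < r then 1 else -1)) : K r s →ₐ[ℝ] B :=
  Ideal.Quotient.liftₐ _ (aeval u) fun a ha => by
    refine (Ideal.span_le (I := RingHom.ker (aeval (R := ℝ) u)) |>.2 ?_) ha
    rintro f ⟨i, rfl⟩
    simp [pow_two, hu i]

theorem lift_gen (u : Fin (r + s) → B)
    (hu : ∀ i, u i * u i = algebraMap ℝ B (if (i : ℕ) < r then 1 else -1)) (i : Fin (r + s)) :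
    lift u hu (gen i) = u i :=
  aeval_X u i

theorem algHom_ext {f g : K r s →ₐ[ℝ] B} (h : ∀ i, f (gen i) = g (gen i)) : f = g :=
  Ideal.Quotient.algHom_ext ℝ (MvPolynomial.algHom_ext h)

end Lift

section Complex

variable (hs : 1 ≤ s)

def firstNegIdx : Fin (r + s) := ⟨r, by omega⟩

theorem not_firstNegIdx_lt : ¬ ((firstNegIdx (r := r) hs : ℕ) < r) := lt_irrefl r

noncomputable def toTensorPowComplex : K r s →ₐ[ℝ] ⨂[ℝ] _ : Fin (r + s), ℂ :=
  lift (fun i => if (i : ℕ) < r then tensorPowI i * tensorPowI (firstNegIdx hs) else tensorPowI i)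
    fun i => by
      split_ifs
      · rw [map_one]
        linear_combination (tensorPowI (firstNegIdx hs) * tensorPowI (firstNegIdx hs)) *
          tensorPowI_mul_self i - tensorPowI_mul_self (firstNegIdx hs)
      · rw [map_neg, map_one, tensorPowI_mul_self]

noncomputable def ofTensorPowComplex : (⨂[ℝ] _ : Fin (r + s), ℂ) →ₐ[ℝ] K r s :=
  liftCommAlgHom fun j =>
    Complex.liftAux (if (j : ℕ) < r then -(gen j * gen (firstNegIdx hs)) else gen j) (by
      split_ifs with hj
      · linear_combination (gen (firstNegIdx hs) * gen (firstNegIdx hs)) * gen_mul_self_of_lt hj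
          + gen_mul_self_of_not_lt (not_firstNegIdx_lt hs)
      · exact gen_mul_self_of_not_lt hj)

theorem toTensorPowComplex_gen (i : Fin (r + s)) :
    toTensorPowComplex hs (gen i) =
      if (i : ℕ) < r then tensorPowI i * tensorPowI (firstNegIdx hs) else tensorPowI i :=
  lift_gen _ _ i

theorem ofTensorPowComplex_tensorPowI (j : Fin (r + s)) :
    ofTensorPowComplex hs (tensorPowI j) =
      if (j : ℕ) < r then -(gen j * gen (firstNegIdx hs)) else gen j := by
  rw [ofTensorPowComplex, tensorPowI, liftCommAlgHom_singleAlgHom, Complex.liftAux_apply_I]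

noncomputable def equivTensorPowComplex : K r s ≃ₐ[ℝ] ⨂[ℝ] _ : Fin (r + s), ℂ :=
  AlgEquiv.ofAlgHom (toTensorPowComplex hs) (ofTensorPowComplex hs)
    (PiTensorProduct.algHom_ext fun j => Complex.algHom_ext <| by
      change toTensorPowComplex hs (ofTensorPowComplex hs (tensorPowI j)) = tensorPowI j
      by_cases hj : (j : ℕ) < r
      · rw [ofTensorPowComplex_tensorPowI, if_pos hj, map_neg, map_mul, toTensorPowComplex_gen,
          toTensorPowComplex_gen, if_pos hj, if_neg (not_firstNegIdx_lt hs)]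
        linear_combination (-(tensorPowI j)) * tensorPowI_mul_self (firstNegIdx hs)
      · rw [ofTensorPowComplex_tensorPowI, if_neg hj, toTensorPowComplex_gen, if_neg hj])
    (algHom_ext fun i => by
      change ofTensorPowComplex hs (toTensorPowComplex hs (gen i)) = gen i
      by_cases hi : (i : ℕ) < r
      · rw [toTensorPowComplex_gen, if_pos hi, map_mul, ofTensorPowComplex_tensorPowI,
          ofTensorPowComplex_tensorPowI, if_pos hi, if_neg (not_firstNegIdx_lt hs)]
        linear_combination (-(gen i)) * gen_mul_self_of_not_lt (not_firstNegIdx_lt hs)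
      · rw [toTensorPowComplex_gen, if_neg hi, ofTensorPowComplex_tensorPowI, if_neg hi])

end Complex

section RealProd

noncomputable def toTensorPowRealProd : K r 0 →ₐ[ℝ] ⨂[ℝ] _ : Fin r, ℝ × ℝ :=
  lift tensorPowE fun i => by
    rw [if_pos (show (i : ℕ) < r from i.isLt), map_one, tensorPowE_mul_self]

noncomputable def ofTensorPowRealProd : (⨂[ℝ] _ : Fin r, ℝ × ℝ) →ₐ[ℝ] K r 0 :=
  liftCommAlgHom fun j => liftRealProd (gen j) (gen_mul_self_of_lt j.isLt)

theorem ofTensorPowRealProd_tensorPowE (j : Fin r) :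
    ofTensorPowRealProd (tensorPowE j) = gen (s := 0) j := by
  rw [ofTensorPowRealProd, tensorPowE, liftCommAlgHom_singleAlgHom,
    liftRealProd_apply_one_neg_one]

noncomputable def equivTensorPowRealProd : K r 0 ≃ₐ[ℝ] ⨂[ℝ] _ : Fin r, ℝ × ℝ :=
  AlgEquiv.ofAlgHom toTensorPowRealProd ofTensorPowRealProd
    (PiTensorProduct.algHom_ext fun j => realProd_algHom_ext <| by
      change toTensorPowRealProd (ofTensorPowRealProd (tensorPowE j)) = tensorPowE j
      rw [ofTensorPowRealProd_tensorPowE]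
      exact lift_gen (s := 0) _ _ j)
    (algHom_ext fun i => by
      change ofTensorPowRealProd (toTensorPowRealProd (gen i)) = gen i
      rw [toTensorPowRealProd, lift_gen, ofTensorPowRealProd_tensorPowE])

end RealProd

end K

theorem stmt16 (r s : ℕ) :
    (1 ≤ s → Nonempty (K r s ≃ₐ[ℝ] tensorPow ℂ (r + s))) ∧
    (s = 0 → Nonempty (K r s ≃ₐ[ℝ] tensorPow (ℝ × ℝ) r)) := by
  refine ⟨fun hs => ⟨K.equivTensorPowComplex hs⟩, ?_⟩
  rintro rfl
  exact ⟨K.equivTensorPowRealProd⟩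
end
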